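/- The pullback of the standard local Poincaré metric ω₀ = (√−1 dz^n ∧ dz̄^n)/(2|z_n|² log²|z_n|) + Σ_{i<n} √−1 dz^i ∧ dz̄^i under the quasi-coordinate map Φ_δ(z', ξ) = (z', exp(−((1+δ)/(1−δ))(1+ξ)/(1−ξ))) equals (√−1 dξ ∧ dξ̄)/(something quasi-isometric to (1−|ξ|²)²) plus Σ_{i<n} √−1 dz^i ∧ dz̄^i; in the one-variable case: φ_δ*( |dw|²/(2|w|² log²|w|) ) = ((1+δ)/(1−δ))² · 2|dξ|²/|1−ξ|⁴ · (1/(2·((1+δ)/(1−δ))² (Re((1+ξ)/(1−ξ)))²)) = |dξ|²/(|1−ξ|⁴ (Re((1+ξ)/(1−ξ)))²), which is uniformly comparable (independent of δ) to the Euclidean metric |dξ|² on |ξ| ≤ 3/4. -/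

import Mathlib

/-! Writing `φ_δ = exp ∘ (−g)` with `g = a · (1 + ξ)/(1 − ξ)`, `a = (1 + δ)/(1 − δ)`, the cusp
density pulls back under `exp(−·)` to the half-plane density `|g'|²/(2 (Re g)²)`, and the Cayley
map `(1 + ξ)/(1 − ξ)` carries this to the Poincaré density `2/(1 − |ξ|²)²` of the disc; the scale
`a` cancels, which is why the bounds do not depend on `δ`. -/

open Complex

lemma Complex.re_one_add_div_one_sub (z : ℂ) :
    ((1 + z) / (1 - z)).re = (1 - ‖z‖ ^ 2) / ‖1 - z‖ ^ 2 := by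
  rw [div_re, ← normSq_eq_norm_sq, ← normSq_eq_norm_sq, normSq_apply, normSq_apply]
  simp only [add_re, sub_re, one_re, add_im, sub_im, one_im]
  ring

lemma Complex.norm_one_sub_pow_four_mul_re_one_add_div_one_sub_sq (z : ℂ) :
    ‖1 - z‖ ^ 4 * ((1 + z) / (1 - z)).re ^ 2 = (1 - ‖z‖ ^ 2) ^ 2 := by
  rcases eq_or_ne z 1 with rfl | hz
  · simp
  have h : ‖1 - z‖ ≠ 0 := norm_ne_zero_iff.mpr (sub_ne_zero.mpr hz.symm)
  rw [re_one_add_div_one_sub]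
  field_simp

lemma hasDerivAt_one_add_div_one_sub {z : ℂ} (hz : z ≠ 1) :
    HasDerivAt (fun w : ℂ => (1 + w) / (1 - w)) (2 / (1 - z) ^ 2) z := by
  have hnum : HasDerivAt (fun w : ℂ => 1 + w) 1 z := (hasDerivAt_id z).const_add 1
  have hden : HasDerivAt (fun w : ℂ => 1 - w) (-1) z := by
    simpa using (hasDerivAt_id z).const_sub 1
  exact (hnum.div hden (sub_ne_zero.mpr hz.symm)).congr_deriv (by ring)

/-- Since `|e^{−g}| = e^{−Re g}`, the logarithm in the cusp density is `−Re g` and the factor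
`|e^{−g}|²` cancels against `|d e^{−g}|² = |e^{−g}|² |g'|²`. -/
lemma cusp_density_cexp_neg_of_hasDerivAt {g : ℂ → ℂ} {g' z : ℂ} (hg : HasDerivAt g g' z) :
    ‖deriv (fun w => exp (-g w)) z‖ ^ 2
        / (2 * ‖exp (-g z)‖ ^ 2 * (Real.log ‖exp (-g z)‖) ^ 2)
      = ‖g'‖ ^ 2 / (2 * (g z).re ^ 2) := by
  have hderiv : HasDerivAt (fun w => exp (-g w)) (exp (-g z) * -g') z := hg.neg.cexp
  rw [hderiv.deriv, norm_mul, norm_neg, norm_exp, Real.log_exp, neg_re,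
    mul_pow, neg_sq, mul_comm 2, mul_assoc,
    mul_div_mul_left _ _ (pow_ne_zero 2 (Real.exp_pos _).ne')]

lemma cusp_density_cexp_neg_ofReal_mul_one_add_div_one_sub {a : ℝ} (ha : a ≠ 0) {z : ℂ} (hz : z ≠ 1) :
    ‖deriv (fun w : ℂ => exp (-((a : ℂ) * ((1 + w) / (1 - w))))) z‖ ^ 2
        / (2 * ‖exp (-((a : ℂ) * ((1 + z) / (1 - z))))‖ ^ 2
          * (Real.log ‖exp (-((a : ℂ) * ((1 + z) / (1 - z))))‖) ^ 2)
      = 2 / (‖1 - z‖ ^ 4 * ((1 + z) / (1 - z)).re ^ 2) := by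
  rw [cusp_density_cexp_neg_of_hasDerivAt ((hasDerivAt_one_add_div_one_sub hz).const_mul (a : ℂ)),
    re_ofReal_mul, norm_mul, norm_div, norm_pow, norm_real, Real.norm_eq_abs, RCLike.norm_ofNat]
  have h : ‖1 - z‖ ≠ 0 := norm_ne_zero_iff.mpr (sub_ne_zero.mpr hz.symm)
  field_simp
  rw [sq_abs]

lemma two_le_poincare_density {z : ℂ} (hz : ‖z‖ < 1) : 2 ≤ 2 / (1 - ‖z‖ ^ 2) ^ 2 := by
  have h0 : 0 < 1 - ‖z‖ ^ 2 := by nlinarith [norm_nonneg z]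
  rw [le_div_iff₀ (by positivity)]
  nlinarith [norm_nonneg z]

lemma poincare_density_le {z : ℂ} {r : ℝ} (hr : r < 1) (hz : ‖z‖ ≤ r) :
    2 / (1 - ‖z‖ ^ 2) ^ 2 ≤ 2 / (1 - r ^ 2) ^ 2 := by
  have hr0 : 0 < 1 - r ^ 2 := by nlinarith [norm_nonneg z]
  gcongr

/-- Pullback of the cusp metric density `1/(2|w|² log²|w|)` on the punctured disc
under the quasi-coordinate map `φ_δ(ξ) = exp(−((1+δ)/(1−δ))(1+ξ)/(1−ξ))`:
it equals `2/(|1−ξ|⁴ (Re((1+ξ)/(1−ξ)))²)`, uniformly comparable (independently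
of `δ`) to the Euclidean density on `|ξ| ≤ 3/4`. -/
theorem quasi_coordinate_pullback_density :
    (∀ δ : ℝ, 0 < δ → δ < 1 → ∀ ξ : ℂ, ‖ξ‖ ≤ 3/4 →
      ‖deriv (fun z : ℂ =>
          Complex.exp (-((((1 + δ) / (1 - δ) : ℝ) : ℂ) * ((1 + z) / (1 - z))))) ξ‖ ^ 2
        / (2 * ‖Complex.exp (-((((1 + δ) / (1 - δ) : ℝ) : ℂ) * ((1 + ξ) / (1 - ξ))))‖ ^ 2
            * (Real.log ‖Complex.exp
                (-((((1 + δ) / (1 - δ) : ℝ) : ℂ) * ((1 + ξ) / (1 - ξ))))‖) ^ 2)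
      = 2 / (‖1 - ξ‖ ^ 4 * (((1 + ξ) / (1 - ξ)).re) ^ 2)) ∧
    ∃ c C : ℝ, 0 < c ∧ ∀ ξ : ℂ, ‖ξ‖ ≤ 3/4 →
      c ≤ 2 / (‖1 - ξ‖ ^ 4 * (((1 + ξ) / (1 - ξ)).re) ^ 2) ∧
      2 / (‖1 - ξ‖ ^ 4 * (((1 + ξ) / (1 - ξ)).re) ^ 2) ≤ C := by
  have hne_one {ξ : ℂ} (hξ : ‖ξ‖ ≤ 3/4) : ξ ≠ 1 := by
    rintro rfl
    norm_num at hξ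
  refine ⟨fun δ hδ0 hδ1 ξ hξ => ?_, 2, 2 / (1 - (3/4) ^ 2) ^ 2, two_pos, fun ξ hξ => ?_⟩
  · have ha : (1 + δ) / (1 - δ) ≠ 0 := div_ne_zero (by linarith) (by linarith)
    exact cusp_density_cexp_neg_ofReal_mul_one_add_div_one_sub ha (hne_one hξ)
  · rw [norm_one_sub_pow_four_mul_re_one_add_div_one_sub_sq]
    exact ⟨two_le_poincare_density (by linarith), poincare_density_le (by norm_num) hξ⟩
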